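/- Let G be a compact group with Haar probability measure, χ an irreducible character of dimension d_χ, and k ≥ 1. Then ∫_{G^{2k}} χ([y₁,z₁]⋯[y_k,z_k]) dy₁ dz₁ ⋯ dy_k dz_k = 1 / d_χ^{2k-1}. -/

import Mathlib

/-!
Write `π` for `ρ` viewed in `V →L[ℂ] V` and `d = dim V`. By Schur's lemma and the invariance of
Haar measure, averaging the conjugates `π g⁻¹ * A * π g` over `G` gives the scalar `(tr A / d) • 1`.
The integrand is the trace of the ordered product of the operators `π [yᵢ, zᵢ]`, whose factors
depend on independent variables, so integrating over `z` replaces each factor by its mean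
`π yᵢ⁻¹ * ∫ π z⁻¹ * π yᵢ * π z = (χ yᵢ / d) • π yᵢ⁻¹`. Averaging Schur's identity over rank-one
operators gives `∫ χ y • π y⁻¹ = d⁻¹ • 1`, so integrating over `y` leaves `tr ((d⁻² • 1) ^ k)`.
-/

open MeasureTheory

theorem Representation.exists_eq_smul_one_of_commute {K G V : Type*} [Field K] [IsAlgClosed K]
    [Group G] [AddCommGroup V] [Module K V] [FiniteDimensional K V] (σ : Representation K G V)
    (hirr : ∀ W : Submodule K V, (∀ g, W.map (σ g) = W) → W = ⊥ ∨ W = ⊤)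
    {T : Module.End K V} (hT : ∀ g, Commute (σ g) T) :
    ∃ c : K, T = c • 1 := by
  nontriviality V using Subsingleton.elim T 0
  obtain ⟨c, hc⟩ := Module.End.exists_eigenvalue T
  have hmaps g := Module.End.mapsTo_genEigenspace_of_comm (hT g).symm c 1
  have hinv g : (T.eigenspace c).map (σ g) = T.eigenspace c :=
    le_antisymm (Submodule.map_le_iff_le_comap.mpr (hmaps g))
      fun w hw => ⟨σ g⁻¹ w, hmaps g⁻¹ hw, by simp⟩
  refine ⟨c, LinearMap.ext fun v => ?_⟩
  have hv : v ∈ T.eigenspace c := ((hirr _ hinv).resolve_left hc).symm ▸ Submodule.mem_top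
  simpa using Module.End.mem_eigenspace_iff.mp hv

theorem MeasureTheory.Measure.isMulRightInvariant_of_isProbabilityMeasure {G : Type*} [Group G]
    [TopologicalSpace G] [IsTopologicalGroup G] [LocallyCompactSpace G] [MeasurableSpace G]
    [BorelSpace G] (μ : Measure G) [μ.IsHaarMeasure] [IsProbabilityMeasure μ] :
    μ.IsMulRightInvariant where
  map_mul_right_eq_self g :=
    have := isProbabilityMeasure_map (μ := μ) (measurable_mul_const g).aemeasurable
    isHaarMeasure_eq_of_isProbabilityMeasure _ _

theorem Continuous.integrable_of_compactSpace {X E : Type*} [TopologicalSpace X] [CompactSpace X]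
    [MeasurableSpace X] [OpensMeasurableSpace X] [NormedAddCommGroup E] {μ : Measure X}
    [IsFiniteMeasure μ] {f : X → E} (hf : Continuous f) : Integrable f μ :=
  hf.integrable_of_hasCompactSupport (.of_compactSpace f)

namespace MeasureTheory

variable {A X : Type*} [NormedRing A] [MeasurableSpace X] {k : ℕ} {μ : Fin k → Measure X}
  [∀ i, SigmaFinite (μ i)] {f : Fin k → X → A}

theorem integrable_pi_ofFn_prod (hf : ∀ i, Integrable (f i) (μ i)) :
    Integrable (fun x => (List.ofFn fun i => f i (x i)).prod) (Measure.pi μ) := by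
  induction k with
  | zero => simp [Measure.pi_of_empty μ]
  | succ k ih =>
    rw [← (measurePreserving_piFinSuccAbove μ 0).symm.integrable_comp_emb
      (MeasurableEquiv.measurableEmbedding _)]
    simp_rw [Function.comp_def, MeasurableEquiv.piFinSuccAbove_symm_apply, Fin.insertNthEquiv,
      List.ofFn_succ, List.prod_cons, Fin.insertNth_zero, Equiv.coe_fn_mk, Fin.cons_succ,
      Fin.zero_succAbove, cast_eq, Fin.cons_zero]
    exact (hf 0).mul_prod (ih fun i => hf i.succ)

variable [NormedSpace ℝ A] [IsScalarTower ℝ A A] [SMulCommClass ℝ A A]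

theorem integral_prod_mul_of_integrable {α β : Type*} [MeasurableSpace α] [MeasurableSpace β]
    {μ : Measure α} {ν : Measure β} [SFinite μ] [SFinite ν] {f : α → A} {g : β → A}
    (hf : Integrable f μ) (hg : Integrable g ν) :
    ∫ z, f z.1 * g z.2 ∂μ.prod ν = (∫ x, f x ∂μ) * ∫ y, g y ∂ν := by
  rw [integral_prod _ (hf.mul_prod hg)]
  simp_rw [integral_const_mul_of_integrable hg]
  exact integral_mul_const_of_integrable hf

theorem integral_pi_ofFn_prod [CompleteSpace A] (hf : ∀ i, Integrable (f i) (μ i)) :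
    ∫ x, (List.ofFn fun i => f i (x i)).prod ∂Measure.pi μ
      = (List.ofFn fun i => ∫ y, f i y ∂μ i).prod := by
  induction k with
  | zero => simp [Measure.pi_of_empty μ]
  | succ k ih =>
    rw [← ((measurePreserving_piFinSuccAbove μ 0).symm).integral_comp']
    simp_rw [MeasurableEquiv.piFinSuccAbove_symm_apply, Fin.insertNthEquiv,
      List.ofFn_succ, List.prod_cons, Fin.insertNth_zero, Equiv.coe_fn_mk, Fin.cons_succ,
      Fin.zero_succAbove, cast_eq, Fin.cons_zero]
    rw [integral_prod_mul_of_integrable (hf 0) (integrable_pi_ofFn_prod fun i => hf i.succ),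
      ih fun i => hf i.succ]

end MeasureTheory

@[fun_prop]
theorem Continuous.linearMap_trace {𝕜 X E : Type*} [NontriviallyNormedField 𝕜] [CompleteSpace 𝕜]
    [TopologicalSpace X] [NormedAddCommGroup E] [NormedSpace 𝕜 E] [FiniteDimensional 𝕜 E]
    {f : X → E →L[𝕜] E} (hf : Continuous f) : Continuous fun x => LinearMap.trace 𝕜 E (f x) :=
  ((LinearMap.trace 𝕜 E).comp (ContinuousLinearMap.coeLM 𝕜)).continuous_of_finiteDimensional.comp hf

theorem MeasureTheory.integral_trace {E X : Type*} [NormedAddCommGroup E] [NormedSpace ℂ E]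
    [FiniteDimensional ℂ E] [MeasurableSpace X] {μ : Measure X} {F : X → E →L[ℂ] E}
    (hF : Integrable F μ) :
    ∫ x, LinearMap.trace ℂ E (F x) ∂μ = LinearMap.trace ℂ E ((∫ x, F x ∂μ : E →L[ℂ] E)) :=
  (LinearMap.toContinuousLinearMap
    ((LinearMap.trace ℂ E).comp (ContinuousLinearMap.coeLM ℂ))).integral_comp_comm hF

def LinearIsometryEquiv.toContinuousLinearMapHom {𝕜 E : Type*} [NormedField 𝕜]
    [SeminormedAddCommGroup E] [NormedSpace 𝕜 E] : (E ≃ₗᵢ[𝕜] E) →* (E →L[𝕜] E) where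
  toFun e := e.toContinuousLinearEquiv
  map_one' := rfl
  map_mul' _ _ := rfl

section ContinuousRepresentation

variable {G : Type*} [Group G] [TopologicalSpace G] [IsTopologicalGroup G] [CompactSpace G]
  [MeasurableSpace G] [BorelSpace G] (μ : Measure G) [μ.IsHaarMeasure] [IsProbabilityMeasure μ]
  {V : Type*} [NormedAddCommGroup V] [NormedSpace ℂ V] [FiniteDimensional ℂ V]
  {π : G →* (V →L[ℂ] V)} (hπ : Continuous π)
  (hirr : ∀ W : Submodule ℂ V, (∀ g, W.map (π g : V →ₗ[ℂ] V) = W) → W = ⊥ ∨ W = ⊤)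
include hπ hirr

theorem integral_conj_eq_trace_div_finrank_smul_one (A : V →L[ℂ] V) :
    ∫ g, π g⁻¹ * A * π g ∂μ = (LinearMap.trace ℂ V A / Module.finrank ℂ V) • 1 := by
  have := μ.isMulRightInvariant_of_isProbabilityMeasure
  have hint : Integrable (fun g => π g⁻¹ * A * π g) μ :=
    Continuous.integrable_of_compactSpace (by fun_prop)
  set T := ∫ g, π g⁻¹ * A * π g ∂μ
  have hconj h : π h * T * π h⁻¹ = T := calc
    π h * T * π h⁻¹ = ∫ g, π h * (π g⁻¹ * A * π g) * π h⁻¹ ∂μ := by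
      rw [integral_mul_const_of_integrable (hint.const_mul _),
        integral_const_mul_of_integrable hint]
    _ = ∫ g, π (g * h⁻¹)⁻¹ * A * π (g * h⁻¹) ∂μ := by
      simp only [mul_inv_rev, inv_inv, map_mul, mul_assoc]
    _ = T := integral_mul_right_eq_self (fun g => π g⁻¹ * A * π g) h⁻¹
  have hcomm h : Commute (π h) T := calc
    π h * T = π h * T * π h⁻¹ * π h := by
      rw [mul_assoc _ (π h⁻¹), ← map_mul, inv_mul_cancel, map_one, mul_one]
    _ = T * π h := by rw [hconj]
  obtain ⟨c, hc⟩ := Representation.exists_eq_smul_one_of_commute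
    (ContinuousLinearMap.toLinearMapRingHom.toMonoidHom.comp π) hirr
    fun h => (hcomm h).map ContinuousLinearMap.toLinearMapRingHom
  have htrace : LinearMap.trace ℂ V T = LinearMap.trace ℂ V A := by
    have hcyc g : LinearMap.trace ℂ V ((π g⁻¹ * A * π g : V →L[ℂ] V) : V →ₗ[ℂ] V) =
        LinearMap.trace ℂ V A := by
      rw [ContinuousLinearMap.toLinearMap_mul, LinearMap.trace_mul_comm,
        ← ContinuousLinearMap.toLinearMap_mul, ← mul_assoc, ← map_mul, mul_inv_cancel, map_one,
        one_mul]
    rw [← integral_trace hint]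
    simp only [hcyc, integral_const, probReal_univ, one_smul]
  nontriviality V
  have hT : T = c • 1 := ContinuousLinearMap.coe_injective hc
  rw [hT, ← htrace, hT]
  simp [Module.finrank_pos.ne']

theorem integral_commutator (y : G) :
    ∫ z, π (y⁻¹ * z⁻¹ * y * z) ∂μ = (LinearMap.trace ℂ V (π y) / Module.finrank ℂ V) • π y⁻¹ := by
  have hint : Integrable (fun z => π z⁻¹ * π y * π z) μ :=
    Continuous.integrable_of_compactSpace (by fun_prop)
  simp_rw [map_mul, mul_assoc (π y⁻¹)]
  rw [integral_const_mul_of_integrable hint,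
    integral_conj_eq_trace_div_finrank_smul_one μ hπ hirr, mul_smul_comm, mul_one]

theorem integral_trace_smul_inv :
    ∫ g, LinearMap.trace ℂ V (π g) • π g⁻¹ ∂μ = (Module.finrank ℂ V : ℂ)⁻¹ • 1 := by
  set b := Module.finBasis ℂ V
  set R : V → Fin _ → V →L[ℂ] V := fun x i =>
    (LinearMap.toContinuousLinearMap (b.coord i)).smulRight x
  have hint x i : Integrable (fun g => π g⁻¹ * R x i * π g) μ :=
    Continuous.integrable_of_compactSpace (by fun_prop)
  have hpt g x : (LinearMap.trace ℂ V (π g) • π g⁻¹) x = ∑ i, (π g⁻¹ * R x i * π g) (b i) := by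
    rw [LinearMap.trace_eq_matrix_trace ℂ b, Matrix.trace]
    simp [R, LinearMap.toMatrix_apply, Finset.sum_smul, map_smul]
  have htr x i : LinearMap.trace ℂ V (R x i) = b.repr x i := LinearMap.trace_smulRight _ _
  ext x
  rw [ContinuousLinearMap.integral_apply (Continuous.integrable_of_compactSpace (by fun_prop)) x]
  simp_rw [hpt]
  rw [integral_finsetSum _ fun i _ => (hint x i).apply_continuousLinearMap _]
  simp_rw [← ContinuousLinearMap.integral_apply (hint x _),
    integral_conj_eq_trace_div_finrank_smul_one μ hπ hirr, htr]
  simp only [smul_apply, one_apply_eq_self, div_eq_inv_mul, mul_smul, ← Finset.smul_sum,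
    b.sum_repr]

theorem integral_pi_trace_prod_commutator {k : ℕ} (y : Fin k → G) :
    ∫ z, LinearMap.trace ℂ V (π (List.ofFn fun i => (y i)⁻¹ * (z i)⁻¹ * y i * z i).prod)
        ∂(Measure.pi fun _ => μ) =
      LinearMap.trace ℂ V ((List.ofFn fun i =>
        (LinearMap.trace ℂ V (π (y i)) / Module.finrank ℂ V) • π (y i)⁻¹).prod : V →L[ℂ] V) := by
  have hint i : Integrable (fun z => π ((y i)⁻¹ * z⁻¹ * y i * z)) μ :=
    Continuous.integrable_of_compactSpace (by fun_prop)
  simp_rw [map_list_prod, List.map_ofFn, Function.comp_def]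
  rw [integral_trace (integrable_pi_ofFn_prod hint), integral_pi_ofFn_prod hint]
  simp_rw [integral_commutator μ hπ hirr]

theorem integral_pi_trace_prod_trace_div_smul_inv (k : ℕ) :
    ∫ y : Fin k → G, LinearMap.trace ℂ V ((List.ofFn fun i =>
        (LinearMap.trace ℂ V (π (y i)) / Module.finrank ℂ V) • π (y i)⁻¹).prod : V →L[ℂ] V)
        ∂(Measure.pi fun _ => μ) =
      (Module.finrank ℂ V : ℂ) / (Module.finrank ℂ V) ^ (2 * k) := by
  have hint : Integrable (fun y => (LinearMap.trace ℂ V (π y) / Module.finrank ℂ V) • π y⁻¹) μ :=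
    Continuous.integrable_of_compactSpace (by fun_prop)
  rw [integral_trace (integrable_pi_ofFn_prod fun _ => hint), integral_pi_ofFn_prod fun _ => hint]
  simp_rw [div_eq_inv_mul, mul_smul, integral_smul, integral_trace_smul_inv μ hπ hirr]
  rw [List.ofFn_const, List.prod_replicate, smul_smul, smul_pow, one_pow]
  simp only [ContinuousLinearMap.toLinearMap_smul, ContinuousLinearMap.toLinearMap_one, map_smul,
    LinearMap.trace_one, smul_eq_mul]
  ring

end ContinuousRepresentation

theorem compact_group_character_product_of_commutators
    {G : Type*} [Group G] [TopologicalSpace G] [IsTopologicalGroup G] [CompactSpace G]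
    [MeasurableSpace G] [BorelSpace G]
    (μ : Measure G) [μ.IsHaarMeasure] [IsProbabilityMeasure μ]
    {V : Type*} [NormedAddCommGroup V] [InnerProductSpace ℂ V] [FiniteDimensional ℂ V]
    (ρ : G →* (V ≃ₗᵢ[ℂ] V))
    (hcont : Continuous fun p : G × V => ρ p.1 p.2)
    (hirr : ∀ W : Submodule ℂ V,
      (∀ g : G, W.map ((ρ g).toLinearEquiv : V →ₗ[ℂ] V) = W) → W = ⊥ ∨ W = ⊤)
    (χ : G → ℂ) (hχ : ∀ g, χ g = LinearMap.trace ℂ V ((ρ g).toLinearEquiv : V →ₗ[ℂ] V))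
    (k : ℕ) (hk : 1 ≤ k) :
    ∫ y : Fin k → G, ∫ z : Fin k → G,
        χ (List.ofFn fun i => (y i)⁻¹ * (z i)⁻¹ * y i * z i).prod
        ∂(Measure.pi fun _ => μ) ∂(Measure.pi fun _ => μ)
      = 1 / (Module.finrank ℂ V : ℂ) ^ (2 * k - 1) := by
  set π := LinearIsometryEquiv.toContinuousLinearMapHom.comp ρ
  have hπ : Continuous π :=
    continuous_clm_apply.mpr fun v => hcont.comp (continuous_id.prodMk continuous_const)
  have hπirr : ∀ W : Submodule ℂ V, (∀ g, W.map (π g : V →ₗ[ℂ] V) = W) → W = ⊥ ∨ W = ⊤ := hirr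
  have hχπ g : χ g = LinearMap.trace ℂ V (π g) := hχ g
  simp_rw [hχπ, integral_pi_trace_prod_commutator μ hπ hπirr,
    integral_pi_trace_prod_trace_div_smul_inv μ hπ hπirr]
  obtain ⟨m, hm⟩ : ∃ m, 2 * k = m + 1 := ⟨2 * k - 1, by omega⟩
  rw [hm, Nat.add_sub_cancel]
  rcases eq_or_ne (Module.finrank ℂ V : ℂ) 0 with h | h
  · -- `V = 0`: both sides vanish, by `1 / 0 = 0` and because `2 * k - 1 ≠ 0`
    simp [h, zero_pow (show m ≠ 0 by omega)]
  · rw [pow_succ, div_mul_cancel_right₀ h, one_div]
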